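/- Let C be a fourth-order tensor on ℝ² with entries C^{ijkl} = (4λμ/(λ+2μ)) a^{ij} a^{kl} + 2μ (a^{ik}a^{jl} + a^{il}a^{jk}), where (a^{ij}) is a symmetric positive definite 2×2 matrix and λ, μ satisfy 3λ + 2μ > 0 and μ > 0. Then C is coercive on symmetric 2×2 matrices: there exists c > 0 such that Σᵢⱼₖₗ C^{ijkl} tₖₗ tᵢⱼ ≥ c Σᵢⱼ (tᵢⱼ)² for all symmetric matrices t = (tᵢⱼ). -/

import Mathlib

/-!
With `α = 4λμ/(λ+2μ)` the energy is `C t : t = α (tr (a t))² + 4μ tr (a t a t)`.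
Cauchy–Schwarz for the inner product `⟨u, v⟩ = tr (a u a v)`, applied to `t` and `a⁻¹`, gives
`(tr (a t))² ≤ 2 tr (a t a t)`, so the energy is at least `min (4μ) (2α + 4μ) · tr (a t a t)`,
where `2α + 4μ = 4μ(3λ+2μ)/(λ+2μ) > 0`. By Cayley–Hamilton, `tr (a M) ≥ (det a / tr a) tr M`
for every positive semidefinite `M`; applied to `M = t a t` and `M = t t` this bounds
`tr (a t a t)` below by `(det a / tr a)² ∑ t_ij²`.
-/

open Matrix Finset

noncomputable section

open scoped MatrixOrder ComplexOrder

namespace Matrix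

theorem PosSemidef.trace_mul_nonneg {n 𝕜 : Type*} [Fintype n] [RCLike 𝕜]
    {A B : Matrix n n 𝕜} (hA : A.PosSemidef) (hB : B.PosSemidef) : 0 ≤ (A * B).trace := by
  classical
  obtain ⟨C, rfl⟩ := CStarAlgebra.nonneg_iff_eq_star_mul_self.mp hA.nonneg
  rw [mul_assoc, trace_mul_comm, mul_assoc, star_eq_conjTranspose, ← mul_assoc]
  exact (hB.mul_mul_conjTranspose_same C).trace_nonneg

theorem mul_self_fin_two {R : Type*} [CommRing R] (A : Matrix (Fin 2) (Fin 2) R) :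
    A * A = A.trace • A - A.det • 1 := by
  ext i j
  fin_cases i <;> fin_cases j <;>
    simp [mul_apply, Fin.sum_univ_two, trace_fin_two, det_fin_two] <;> ring

theorem PosSemidef.det_div_trace_mul_trace_le {A M : Matrix (Fin 2) (Fin 2) ℝ}
    (hA : A.PosSemidef) (hM : M.PosSemidef) : A.det / A.trace * M.trace ≤ (A * M).trace := by
  have hAM := hA.trace_mul_nonneg hM
  rcases hA.trace_nonneg.eq_or_lt with htr | htr
  · simpa [← htr] using hAM
  -- Cayley–Hamilton turns `tr (A² M) ≥ 0` into the claim
  have hCH : 0 ≤ A.trace * (A * M).trace - A.det * M.trace := by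
    have h := (hA.pow 2).trace_mul_nonneg hM
    rwa [sq, mul_self_fin_two, sub_mul, smul_mul_assoc, smul_mul_assoc, one_mul, trace_sub,
      trace_smul, trace_smul, smul_eq_mul, smul_eq_mul] at h
  rw [div_mul_eq_mul_div, div_le_iff₀ htr]
  linarith

theorem PosDef.sq_trace_mul_le_card_mul_trace {n : Type*} [Fintype n] [DecidableEq n]
    {A T : Matrix n n ℝ} (hA : A.PosDef) (hT : T.IsSymm) :
    (A * T).trace ^ 2 ≤ Fintype.card n * (A * T * A * T).trace := by
  rcases isEmpty_or_nonempty n with hn | hn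
  · simp [trace]
  have hN : (0 : ℝ) < Fintype.card n := by exact_mod_cast Fintype.card_pos
  set c := (A * T).trace / Fintype.card n
  set W := T - c • A⁻¹
  have hW : W.IsHermitian := by
    rw [isHermitian_iff_isSymm]
    exact hT.sub ((isHermitian_iff_isSymm.mp hA.isHermitian.inv).smul c)
  have hAW : A * W = A * T - c • 1 := by
    rw [mul_sub, mul_smul_comm, mul_nonsing_inv A ((isUnit_iff_isUnit_det A).mp hA.isUnit)]
  have h0 : 0 ≤ (A * (W * A * W)).trace := by
    have := hA.posSemidef.conjTranspose_mul_mul_same W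
    rw [hW.eq] at this
    exact hA.posSemidef.trace_mul_nonneg this
  have hexp : (A * (W * A * W)).trace
      = (A * T * A * T).trace - 2 * c * (A * T).trace + c ^ 2 * Fintype.card n := by
    rw [← mul_assoc, ← mul_assoc, mul_assoc (A * W), hAW]
    simp only [sub_mul, mul_sub, smul_mul_assoc, mul_smul_comm, one_mul, mul_one,
      trace_sub, trace_smul, trace_one, smul_eq_mul, mul_assoc]
    ring
  rw [hexp] at h0
  have : (A * T).trace = c * Fintype.card n := (div_mul_cancel₀ _ hN.ne').symm
  nlinarith

theorem PosSemidef.det_div_trace_sq_mul_sum_sq_le {A T : Matrix (Fin 2) (Fin 2) ℝ}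
    (hA : A.PosSemidef) (hT : T.IsSymm) :
    (A.det / A.trace) ^ 2 * ∑ i, ∑ j, T i j ^ 2 ≤ (A * T * A * T).trace := by
  have hTT : (T * T).PosSemidef := by
    simpa [hT.eq] using posSemidef_conjTranspose_mul_self T
  have hTAT : (T * A * T).PosSemidef := by
    simpa [hT.eq] using hA.conjTranspose_mul_mul_same T
  have hsum : ∑ i, ∑ j, T i j ^ 2 = (T * T).trace := by
    rw [show T * T = Tᵀ * T by rw [hT.eq]]
    simp only [trace, diag_apply, mul_apply, transpose_apply, sq]
    exact sum_comm
  have hk : 0 ≤ A.det / A.trace := div_nonneg hA.det_nonneg hA.trace_nonneg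
  calc (A.det / A.trace) ^ 2 * ∑ i, ∑ j, T i j ^ 2
      = A.det / A.trace * (A.det / A.trace * (T * T).trace) := by rw [hsum]; ring
    _ ≤ A.det / A.trace * (A * (T * T)).trace := by
      gcongr; exact hA.det_div_trace_mul_trace_le hTT
    _ = A.det / A.trace * (T * A * T).trace := by rw [← trace_mul_cycle, mul_assoc]
    _ ≤ (A * (T * A * T)).trace := hA.det_div_trace_mul_trace_le hTAT
    _ = (A * T * A * T).trace := by simp only [mul_assoc]

end Matrix

theorem sum_isotropic_tensor_mul_mul_eq {n : Type*} [Fintype n] (α β : ℝ)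
    {A T : Matrix n n ℝ} (hA : A.IsSymm) (hT : T.IsSymm) :
    ∑ i, ∑ j, ∑ k, ∑ l, (α * A i j * A k l + β * (A i k * A j l + A i l * A j k))
        * T k l * T i j
      = α * (A * T).trace ^ 2 + 2 * β * (A * T * A * T).trace := by
  have h1 : ∑ i, ∑ j, ∑ k, ∑ l, A i j * A k l * T k l * T i j = (A * T).trace ^ 2 := by
    simp only [sq, trace, diag_apply, mul_apply, sum_mul, mul_sum]
    refine sum_congr rfl fun i _ => sum_congr rfl fun j _ =>
      sum_congr rfl fun k _ => sum_congr rfl fun l _ => ?_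
    rw [hT.apply i j, hT.apply k l]; ring
  have h2 : ∑ i, ∑ j, ∑ k, ∑ l, A i k * A j l * T k l * T i j = (A * T * A * T).trace := by
    simp only [trace, diag_apply, mul_apply, sum_mul]
    refine sum_congr rfl fun i _ => sum_congr rfl fun j _ => ?_
    rw [sum_comm]
    refine sum_congr rfl fun k _ => sum_congr rfl fun l _ => ?_
    rw [hT.apply i j, hA.apply k j]; ring
  have h3 : ∑ i, ∑ j, ∑ k, ∑ l, A i l * A j k * T k l * T i j
      = ∑ i, ∑ j, ∑ k, ∑ l, A i k * A j l * T k l * T i j := by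
    refine sum_congr rfl fun i _ => sum_congr rfl fun j _ => ?_
    rw [sum_comm]
    refine sum_congr rfl fun k _ => sum_congr rfl fun l _ => ?_
    rw [hT.apply k l]
  have hsplit : ∀ i j k l, (α * A i j * A k l + β * (A i k * A j l + A i l * A j k))
      * T k l * T i j = α * (A i j * A k l * T k l * T i j) + β * (A i k * A j l * T k l * T i j)
        + β * (A i l * A j k * T k l * T i j) := fun _ _ _ _ => by ring
  simp only [hsplit, sum_add_distrib, ← mul_sum, h3, h1, h2]
  ring

theorem min_mul_le_mul_sq_add_mul {α β s x N : ℝ} (hN : 0 < N) (hs : s ^ 2 ≤ N * x) :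
    min β (N * α + β) * x ≤ α * s ^ 2 + β * x := by
  have hx : 0 ≤ x := nonneg_of_mul_nonneg_right (by nlinarith [sq_nonneg s]) hN
  rcases le_total 0 α with hα | hα
  · nlinarith [min_le_left β (N * α + β), sq_nonneg s]
  · nlinarith [min_le_right β (N * α + β)]

theorem stmt_16 (lam mu : ℝ) (hmu : 0 < mu) (hlam : 0 < 3 * lam + 2 * mu)
    (a : Matrix (Fin 2) (Fin 2) ℝ) (ha : a.IsSymm) (hpos : a.PosDef)
    (C : Fin 2 → Fin 2 → Fin 2 → Fin 2 → ℝ)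
    (hC : ∀ i j k l, C i j k l =
      (4 * lam * mu / (lam + 2 * mu)) * a i j * a k l
        + 2 * mu * (a i k * a j l + a i l * a j k)) :
    ∃ c > (0 : ℝ), ∀ t : Matrix (Fin 2) (Fin 2) ℝ, t.IsSymm →
      (∑ i : Fin 2, ∑ j : Fin 2, ∑ k : Fin 2, ∑ l : Fin 2,
        C i j k l * t k l * t i j) ≥
      c * ∑ i : Fin 2, ∑ j : Fin 2, (t i j) ^ 2 := by
  set α := 4 * lam * mu / (lam + 2 * mu)
  have hα : 0 < 2 * α + 2 * (2 * mu) := by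
    have hL : 0 < lam + 2 * mu := by linarith
    have : 2 * α + 2 * (2 * mu) = 4 * mu * (3 * lam + 2 * mu) / (lam + 2 * mu) := by
      simp only [α]; field_simp; ring
    rw [this]; positivity
  have hmin : 0 < min (2 * (2 * mu)) (2 * α + 2 * (2 * mu)) := lt_min (by positivity) hα
  refine ⟨min (2 * (2 * mu)) (2 * α + 2 * (2 * mu)) * (a.det / a.trace) ^ 2,
    mul_pos hmin (pow_pos (div_pos hpos.det_pos hpos.trace_pos) 2), fun t ht => ?_⟩
  simp only [hC, ge_iff_le]
  rw [sum_isotropic_tensor_mul_mul_eq _ _ ha ht, mul_assoc]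
  calc _ ≤ min (2 * (2 * mu)) (2 * α + 2 * (2 * mu)) * (a * t * a * t).trace := by
        gcongr; exact hpos.posSemidef.det_div_trace_sq_mul_sum_sq_le ht
    _ ≤ _ := min_mul_le_mul_sq_add_mul two_pos <| by
        simpa using hpos.sq_trace_mul_le_card_mul_trace ht
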